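/- Let Γ be a good pointclass such that every subset of [ℕ]^ω belonging to Γ has the Ramsey property. Then every proper filter on ℕ that belongs to Γ (as a subset of P(ℕ) ≅ 2^ℕ) is meager; equivalently, every proper ideal on ℕ belonging to Γ is meager. -/

import Mathlib

open Set

open Classical in
/-- The characteristic function of a set, viewed as a point of the Cantor space `α → Bool`. -/
noncomputable def chi {α : Type} (s : Set α) : α → Bool :=
  fun a => if a ∈ s then true else false
/-- A *good pointclass*: a collection of subsets of Polish spaces containing all clopen
sets and closed under countable intersections, countable unions, finite products,
continuous images, and continuous preimages. -/
structure GoodPointclass : Type 1 where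
  mem : ∀ (X : Type) [TopologicalSpace X], Set (Set X)
  clopen_mem : ∀ (X : Type) [TopologicalSpace X] [PolishSpace X] (s : Set X),
    IsClopen s → s ∈ mem X
  iInter_mem : ∀ (X : Type) [TopologicalSpace X] [PolishSpace X] (s : ℕ → Set X),
    (∀ n, s n ∈ mem X) → (⋂ n, s n) ∈ mem X
  iUnion_mem : ∀ (X : Type) [TopologicalSpace X] [PolishSpace X] (s : ℕ → Set X),
    (∀ n, s n ∈ mem X) → (⋃ n, s n) ∈ mem X
  prod_mem : ∀ (X Y : Type) [TopologicalSpace X] [PolishSpace X]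
    [TopologicalSpace Y] [PolishSpace Y] (s : Set X) (t : Set Y),
    s ∈ mem X → t ∈ mem Y → s ×ˢ t ∈ mem (X × Y)
  image_mem : ∀ (X Y : Type) [TopologicalSpace X] [PolishSpace X]
    [TopologicalSpace Y] [PolishSpace Y] (f : X → Y) (s : Set X),
    Continuous f → s ∈ mem X → f '' s ∈ mem Y
  preimage_mem : ∀ (X Y : Type) [TopologicalSpace X] [PolishSpace X]
    [TopologicalSpace Y] [PolishSpace Y] (f : X → Y) (t : Set Y),
    Continuous f → t ∈ mem Y → f ⁻¹' t ∈ mem X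
/-- A set `X ⊆ [ℕ]^ω` has the Ramsey property: there is an infinite `H ⊆ ℕ` with
`[H]^ω ⊆ X` or `[H]^ω ∩ X = ∅`. -/
def RamseyProp (X : Set (Set ℕ)) : Prop :=
  ∃ H : Set ℕ, H.Infinite ∧
    ((∀ y : Set ℕ, y.Infinite → y ⊆ H → y ∈ X) ∨
     (∀ y : Set ℕ, y.Infinite → y ⊆ H → y ∉ X))
/-- A proper ideal on `ℕ`: contains `∅` and all finite sets, not `ℕ`,
closed under subsets and finite unions. -/
def IsProperIdeal (I : Set (Set ℕ)) : Prop :=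
  ∅ ∈ I ∧ (Set.univ : Set ℕ) ∉ I ∧
  (∀ A ∈ I, ∀ B : Set ℕ, B ⊆ A → B ∈ I) ∧
  (∀ A ∈ I, ∀ B ∈ I, A ∪ B ∈ I) ∧
  (∀ A : Set ℕ, A.Finite → A ∈ I)

/-- A proper filter on `ℕ`: the pointwise complements form a proper ideal. -/
def IsProperFilter (F : Set (Set ℕ)) : Prop :=
  IsProperIdeal (compl '' F)

/-!
For `A = {a₀ < a₁ < ⋯}` put `altUnion A = [a₀, a₁) ∪ [a₂, a₃) ∪ ⋯`. This map is continuous on the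
Cantor space, so `X = {A infinite | altUnion A ∈ F}` lies in `Γ` and has the Ramsey property,
witnessed by some infinite `H = {h₀ < h₁ < ⋯}`. `[H]^ω ⊆ X` is impossible: removing `h₀` from `H`
turns `altUnion H` into a set disjoint from it. If `[H]^ω ∩ X = ∅`, every `B ∈ F` meets all but
finitely many of the intervals `[hₖ, hₖ₊₁)`: otherwise some `A ⊆ H` has as gaps of `altUnion A`
infinitely many intervals missed by `B`, so `altUnion A` contains `B` up to a finite set and
`A ∈ X`. The sets meeting almost every interval of a fixed interval partition form a meagre set.
Ideals reduce to filters by complementation, a homeomorphism of the Cantor space.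
-/

open Filter Topology

lemma chi_apply_eq_true {α : Type} {s : Set α} {a : α} : chi s a = true ↔ a ∈ s := by
  simp [chi]

lemma chi_injective {α : Type} : Function.Injective (chi (α := α)) := fun s t hst => by
  ext a
  rw [← chi_apply_eq_true, hst, chi_apply_eq_true]

lemma chi_surjective {α : Type} : Function.Surjective (chi (α := α)) := fun x =>
  ⟨{a | x a = true}, funext fun a => by simp [chi]⟩

lemma image_chi_preimage {α β : Type} {T : Set α → Set β} {Φ : (α → Bool) → β → Bool}
    (hT : ∀ A, chi (T A) = Φ (chi A)) (F : Set (Set β)) :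
    chi '' (T ⁻¹' F) = Φ ⁻¹' (chi '' F) := by
  ext x
  obtain ⟨A, rfl⟩ := chi_surjective x
  rw [chi_injective.mem_set_image, mem_preimage, mem_preimage, ← hT,
    chi_injective.mem_set_image]

lemma image_chi_setOf_infinite :
    chi '' {A : Set ℕ | A.Infinite} = ⋂ k, ⋃ n, {x | x (k + n + 1) = true} := by
  ext x
  obtain ⟨A, rfl⟩ := chi_surjective x
  simp only [chi_injective.mem_set_image, mem_ofPred_eq, mem_iInter, mem_iUnion,
    chi_apply_eq_true, Set.infinite_iff_exists_gt]
  refine forall_congr' fun k =>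
    ⟨fun ⟨b, hb, hkb⟩ => ⟨b - k - 1, ?_⟩, fun ⟨n, hn⟩ => ⟨_, hn, by omega⟩⟩
  rwa [show k + (b - k - 1) + 1 = b by omega]

def boolNotHomeomorph (α : Type) : (α → Bool) ≃ₜ (α → Bool) :=
  Homeomorph.piCongrRight fun _ => Equiv.boolNot.toHomeomorphOfDiscrete

lemma chi_compl {α : Type} (A : Set α) : chi Aᶜ = boolNotHomeomorph α (chi A) := by
  funext a
  by_cases ha : a ∈ A <;> simp [chi, boolNotHomeomorph, ha] <;> rfl

lemma Homeomorph.isMeagre_preimage {X Y : Type*} [TopologicalSpace X] [TopologicalSpace Y]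
    (e : X ≃ₜ Y) {s : Set Y} : IsMeagre (e ⁻¹' s) ↔ IsMeagre s := by
  refine ⟨fun h => ?_, fun h => h.preimage_of_isOpenMap e.continuous e.isOpenMap⟩
  rw [← e.symm_preimage_preimage s]
  exact h.preimage_of_isOpenMap e.symm.continuous e.symm.isOpenMap

instance : PolishSpace (ℕ → Bool) where

namespace GoodPointclass

variable (Γ : GoodPointclass) {X : Type} [TopologicalSpace X] [PolishSpace X]

lemma inter_mem {s t : Set X} (hs : s ∈ Γ.mem X) (ht : t ∈ Γ.mem X) : s ∩ t ∈ Γ.mem X := by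
  have : s ∩ t = ⋂ n : ℕ, if n = 0 then s else t := by
    ext x
    simp only [mem_inter_iff, mem_iInter]
    refine ⟨fun ⟨hxs, hxt⟩ n => ?_, fun h => ⟨by simpa using h 0, by simpa using h 1⟩⟩
    split_ifs <;> assumption
  rw [this]
  exact Γ.iInter_mem X _ fun n => by split_ifs <;> assumption

lemma image_chi_setOf_infinite_mem : chi '' {A : Set ℕ | A.Infinite} ∈ Γ.mem (ℕ → Bool) := by
  rw [image_chi_setOf_infinite]
  refine Γ.iInter_mem _ _ fun k => Γ.iUnion_mem _ _ fun n => Γ.clopen_mem _ _ ?_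
  exact (isClopen_discrete {true}).preimage (continuous_apply (k + n + 1))

end GoodPointclass

open Classical in
/-- For `A = {a₀ < a₁ < ⋯}` this is `[a₀, a₁) ∪ [a₂, a₃) ∪ ⋯`. -/
noncomputable def altUnion (A : Set ℕ) : Set ℕ := {m | Odd (Nat.count (· ∈ A) (m + 1))}

def altUnionMap (x : ℕ → Bool) : ℕ → Bool :=
  fun m => decide (Odd (Nat.count (fun j => x j = true) (m + 1)))

lemma chi_altUnion (A : Set ℕ) : chi (altUnion A) = altUnionMap (chi A) := by
  classical
  have hcount (n : ℕ) : Nat.count (fun j => chi A j = true) n = Nat.count (· ∈ A) n := by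
    simp only [Nat.count_eq_card_filter_range, chi_apply_eq_true]
  funext m
  rw [altUnionMap, hcount]
  unfold chi altUnion
  split_ifs <;> simp_all

lemma continuous_count_eq_true (n : ℕ) :
    Continuous fun x : ℕ → Bool => Nat.count (fun j => x j = true) n := by
  induction n with
  | zero => simpa only [Nat.count_zero] using continuous_const
  | succ n ih =>
    simp only [Nat.count_succ]
    exact ih.add
      ((continuous_of_discreteTopology (f := fun b : Bool => if b = true then 1 else 0)).comp
        (continuous_apply n))

lemma continuous_altUnionMap : Continuous altUnionMap :=
  continuous_pi fun m =>
    (continuous_of_discreteTopology (f := fun k : ℕ => decide (Odd k))).comp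
      (continuous_count_eq_true (m + 1))

lemma GoodPointclass.image_chi_setOf_infinite_altUnion_mem (Γ : GoodPointclass)
    {F : Set (Set ℕ)} (hF : chi '' F ∈ Γ.mem (ℕ → Bool)) :
    chi '' {A | A.Infinite ∧ altUnion A ∈ F} ∈ Γ.mem (ℕ → Bool) := by
  rw [show {A | A.Infinite ∧ altUnion A ∈ F} = {A | A.Infinite} ∩ altUnion ⁻¹' F from rfl,
    image_inter chi_injective, image_chi_preimage chi_altUnion]
  exact Γ.inter_mem Γ.image_chi_setOf_infinite_mem
    (Γ.preimage_mem _ _ _ _ continuous_altUnionMap hF)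

section StrictMono

variable {a : ℕ → ℕ} {i m : ℕ}

lemma mem_altUnion_range_iff_even (ha : StrictMono a) (him : a i ≤ m) (hmi : m < a (i + 1)) :
    m ∈ altUnion (range a) ↔ Even i := by
  classical
  have hcount : {j ∈ Finset.range (m + 1) | j ∈ range a} = (Finset.range (i + 1)).image a := by
    ext j
    simp only [Finset.mem_filter, Finset.mem_range, Finset.mem_image, mem_range]
    constructor
    · rintro ⟨hj, t, rfl⟩
      exact ⟨t, ha.lt_iff_lt.1 (by omega), rfl⟩
    · rintro ⟨t, ht, rfl⟩
      exact ⟨by have := ha.monotone (Nat.lt_succ_iff.1 ht); omega, t, rfl⟩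
  rw [altUnion, mem_ofPred_eq, Nat.count_eq_card_filter_range, hcount,
    Finset.card_image_of_injective _ ha.injective, Finset.card_range, Nat.odd_add_one,
    Nat.not_odd_iff_even]

lemma notMem_altUnion_range_of_lt (ha : Monotone a) (hm : m < a 0) : m ∉ altUnion (range a) := by
  classical
  have hcount : {j ∈ Finset.range (m + 1) | j ∈ range a} = ∅ := by
    refine Finset.filter_eq_empty_iff.2 fun j hj => ?_
    rintro ⟨t, rfl⟩
    have := ha t.zero_le
    simp only [Finset.mem_range] at hj
    omega
  rw [altUnion, mem_ofPred_eq, Nat.count_eq_card_filter_range, hcount]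
  simp

lemma exists_le_lt_succ_of_strictMono (ha : StrictMono a) (hm : a 0 ≤ m) :
    ∃ i, a i ≤ m ∧ m < a (i + 1) := by
  classical
  have hex : ∃ n, m < a n := ⟨m + 1, (Nat.lt_succ_self m).trans_le ha.le_apply⟩
  obtain ⟨i, hi⟩ : ∃ i, Nat.find hex = i + 1 :=
    Nat.exists_eq_succ_of_ne_zero fun h0 => by have := Nat.find_spec hex; rw [h0] at this; omega
  refine ⟨i, not_lt.1 (Nat.find_min hex (by omega)), hi ▸ Nat.find_spec hex⟩

lemma disjoint_altUnion_range_succ (ha : StrictMono a) :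
    Disjoint (altUnion (range a)) (altUnion (range fun n => a (n + 1))) := by
  have ha' : StrictMono fun n => a (n + 1) := fun _ _ h => ha (Nat.succ_lt_succ h)
  refine Set.disjoint_left.2 fun m hm hm' => ?_
  obtain h0 | h0 := lt_or_ge m (a 0)
  · exact notMem_altUnion_range_of_lt ha.monotone h0 hm
  obtain ⟨_ | j, him, hmi⟩ := exists_le_lt_succ_of_strictMono ha h0
  · exact notMem_altUnion_range_of_lt ha'.monotone hmi hm'
  · rw [mem_altUnion_range_iff_even ha him hmi, Nat.even_add_one] at hm
    exact hm ((mem_altUnion_range_iff_even ha' him hmi).1 hm')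

end StrictMono

lemma exists_strictMono_eventually_mem_altUnion {h : ℕ → ℕ} (hh : StrictMono h) {B : Set ℕ}
    (hB : ∃ᶠ k in atTop, ∀ j ∈ Finset.Ico (h k) (h (k + 1)), j ∉ B) :
    ∃ a : ℕ → ℕ, StrictMono a ∧ range a ⊆ range h ∧
      ∀ᶠ m in atTop, m ∈ B → m ∈ altUnion (range a) := by
  obtain ⟨φ, hφ, hφB⟩ := extraction_of_frequently_atTop hB
  -- With `a = h ∘ c`, the gaps `[a (2i+1), a (2i+2))` of `altUnion (range a)` are the blocks
  -- `φ (2i+2)`, all missed by `B`.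
  set c : ℕ → ℕ := fun n => if Even n then φ n + 1 else φ (n + 1) with hc
  have hc_odd (i : ℕ) : c (2 * i + 1) = φ (2 * i + 2) := by simp [hc]
  have hc_even (i : ℕ) : c (2 * i + 2) = φ (2 * i + 2) + 1 := by
    simp [hc, show Even (2 * i + 2) from ⟨i + 1, by ring⟩]
  have hcmono : StrictMono c := by
    refine strictMono_nat_of_lt_succ fun n => ?_
    rcases Nat.even_or_odd n with hn | hn
    · have := hφ (Nat.lt_add_one n)
      have := hφ (Nat.lt_add_one (n + 1))
      simp only [hc, hn, ↓reduceIte, Nat.even_add_one, not_true_eq_false]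
      omega
    · simp [hc, hn, Nat.not_even_iff_odd.2 hn]
  have ha : StrictMono (h ∘ c) := hh.comp hcmono
  refine ⟨h ∘ c, ha, range_comp_subset_range c h, eventually_atTop.2 ⟨h (c 0), fun m hm hmB => ?_⟩⟩
  obtain ⟨i, him, hmi⟩ := exists_le_lt_succ_of_strictMono ha hm
  refine (mem_altUnion_range_iff_even ha him hmi).2 (Nat.not_odd_iff_even.1 fun ⟨t, ht⟩ => ?_)
  subst ht
  simp only [Function.comp_apply, hc_odd, show 2 * t + 1 + 1 = 2 * t + 2 by ring, hc_even]
    at him hmi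
  exact hφB (2 * t + 2) m (Finset.mem_Ico.2 ⟨him, hmi⟩) hmB

lemma isMeagre_setOf_eventually_exists_mem {α : Type*} {I : ℕ → Finset α}
    (hI : ∀ j, ∀ᶠ k in atTop, j ∉ I k) :
    IsMeagre {x : α → Bool | ∀ᶠ k in atTop, ∃ j ∈ I k, x j = true} := by
  classical
  set E : ℕ → Set (α → Bool) := fun m => ⋂ k ≥ m, {x | ∃ j ∈ I k, x j = true} with hE
  have hunion : {x : α → Bool | ∀ᶠ k in atTop, ∃ j ∈ I k, x j = true} = ⋃ m, E m := by
    ext x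
    simp only [hE, mem_ofPred_eq, eventually_atTop, mem_iUnion, mem_iInter]
  rw [hunion]
  refine isMeagre_iUnion fun m => IsNowhereDense.isMeagre ?_
  have hclosed : IsClosed (E m) := by
    refine isClosed_biInter fun k _ => ?_
    rw [show {x : α → Bool | ∃ j ∈ I k, x j = true} = ⋃ j ∈ I k, {x | x j = true} by ext; simp]
    exact isClosed_biUnion_finset fun j _ =>
      (isClosed_discrete {true}).preimage (continuous_apply (A := fun _ : α => Bool) j)
  rw [hclosed.isNowhereDense_iff, interior_eq_empty_iff_dense_compl]
  -- Switching `x` off on the block `I k` leaves `E m`, and converges to `x` as `k → ∞`.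
  intro x
  set y : ℕ → α → Bool := fun k j => x j && !decide (j ∈ I k) with hy
  have hyx : Tendsto y atTop (𝓝 x) := tendsto_pi_nhds.2 fun j =>
    tendsto_const_nhds.congr' ((hI j).mono fun k hk => by simp [hy, hk])
  refine mem_closure_of_tendsto hyx ((eventually_ge_atTop m).mono fun k hk hyk => ?_)
  obtain ⟨j, hj, hyj⟩ := mem_iInter₂.1 hyk k hk
  simp [hy, hj] at hyj

namespace IsProperFilter

variable {F : Set (Set ℕ)}

def toFilter (hF : IsProperFilter F) : Filter ℕ where
  sets := F
  univ_sets := by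
    obtain ⟨D, hD, hDe⟩ := hF.1
    rwa [compl_empty_iff.1 hDe] at hD
  sets_of_superset {B C} hB hBC := by
    rw [← compl_injective.mem_set_image] at hB ⊢
    exact hF.2.2.1 _ hB _ (compl_subset_compl.2 hBC)
  inter_sets {B C} hB hC := by
    rw [← compl_injective.mem_set_image] at hB hC ⊢
    rw [compl_inter]
    exact hF.2.2.2.1 _ hB _ hC

lemma neBot_toFilter (hF : IsProperFilter F) : hF.toFilter.NeBot := by
  refine ⟨fun hbot => hF.2.1 ?_⟩
  rw [mem_compl_image, compl_univ]
  exact empty_mem_iff_bot.2 hbot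

lemma toFilter_le_cofinite (hF : IsProperFilter F) : hF.toFilter ≤ cofinite := fun _ hs =>
  compl_injective.mem_set_image.1 (hF.2.2.2.2 _ hs)

end IsProperFilter

lemma IsProperIdeal.isProperFilter_compl_image {I : Set (Set ℕ)} (hI : IsProperIdeal I) :
    IsProperFilter (compl '' I) := by
  rwa [IsProperFilter, compl_compl_image]

theorem isMeagre_image_chi_of_ramseyProp {f : Filter ℕ} [f.NeBot] (hf : f ≤ cofinite)
    (hR : RamseyProp {A | A.Infinite ∧ altUnion A ∈ f}) : IsMeagre (chi '' f.sets) := by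
  obtain ⟨H, hH, hcase⟩ := hR
  set h := Nat.nth (· ∈ H)
  have hh : StrictMono h := Nat.nth_strictMono hH
  have hhH : range h ⊆ H := range_subset_iff.2 (Nat.nth_mem_of_infinite hH)
  rcases hcase with hall | hnone
  · have hh' : StrictMono fun n => h (n + 1) := fun _ _ hlt => hh (Nat.succ_lt_succ hlt)
    have h₁ := (hall _ (infinite_range_of_injective hh.injective) hhH).2
    have h₂ := (hall _ (infinite_range_of_injective hh'.injective)
      ((range_comp_subset_range _ h).trans hhH)).2
    have := inter_mem h₁ h₂
    rw [(disjoint_altUnion_range_succ hh).inter_eq] at this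
    exact absurd this (empty_notMem f)
  refine (isMeagre_setOf_eventually_exists_mem (I := fun k => Finset.Ico (h k) (h (k + 1)))
    fun j => ?_).mono ?_
  · filter_upwards [hh.tendsto_atTop.eventually_gt_atTop j] with k hk
    simp [hk]
  rintro _ ⟨B, hB, rfl⟩
  by_contra hmeet
  rw [mem_ofPred_eq, not_eventually] at hmeet
  obtain ⟨a, ha, hah, hBa⟩ := exists_strictMono_eventually_mem_altUnion hh
    (hmeet.mono fun k hk j hj hjB => hk ⟨j, hj, chi_apply_eq_true.2 hjB⟩)
  have hAinf := infinite_range_of_injective ha.injective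
  exact hnone _ hAinf (hah.trans hhH) ⟨hAinf, mp_mem hB (hf (Nat.cofinite_eq_atTop ▸ hBa))⟩

theorem filters_and_ideals_in_ramsey_pointclass_are_meager (Γ : GoodPointclass)
    (hRamsey : ∀ X : Set (Set ℕ), (∀ x ∈ X, x.Infinite) →
      chi '' X ∈ Γ.mem (ℕ → Bool) → RamseyProp X) :
    (∀ F : Set (Set ℕ), IsProperFilter F → chi '' F ∈ Γ.mem (ℕ → Bool) →
        IsMeagre (chi '' F : Set (ℕ → Bool))) ∧
    (∀ I : Set (Set ℕ), IsProperIdeal I → chi '' I ∈ Γ.mem (ℕ → Bool) →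
        IsMeagre (chi '' I : Set (ℕ → Bool))) := by
  have hfilter (F : Set (Set ℕ)) (hF : IsProperFilter F) (hΓF : chi '' F ∈ Γ.mem (ℕ → Bool)) :
      IsMeagre (chi '' F) :=
    have := hF.neBot_toFilter
    isMeagre_image_chi_of_ramseyProp hF.toFilter_le_cofinite
      (hRamsey _ (fun _ hA => hA.1) (Γ.image_chi_setOf_infinite_altUnion_mem hΓF))
  refine ⟨hfilter, fun I hI hΓI => ?_⟩
  have hcompl : chi '' (compl '' I) = boolNotHomeomorph ℕ ⁻¹' (chi '' I) := by
    rw [compl_image]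
    exact image_chi_preimage chi_compl I
  rw [← (boolNotHomeomorph ℕ).isMeagre_preimage, ← hcompl]
  exact hfilter _ hI.isProperFilter_compl_image
    (hcompl ▸ Γ.preimage_mem _ _ _ _ (boolNotHomeomorph ℕ).continuous hΓI)
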